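/- arXiv:2002.08053 — 2 statements merged into one kernel-verified Lean document; each statement's English description precedes it below -/
import Mathlib

section
/- Let n and c be positive integers, let ι be a nonempty finite type, and let f : ι → Fin n → Fin c → ℝ. Then Rad(fun g i => min_{y ∈ Fin c} f g i y) ≤ ∑_{y ∈ Fin c} Rad(fun g i => f g i y), where for h : ι → Fin n → ℝ, Rad(h) := (1/2^n) · ∑_{σ : Fin n → Bool} max_{g ∈ ι} (1/n) · ∑_{i} ε_σ(i) · h g i, and ε_σ(i) = 1 if σ i = true and ε_σ(i) = −1 otherwise. -/
open Finset

/-- The empirical Rademacher average of a family `h : ι → Fin n → ℝ`. -/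
noncomputable def rad {ι : Type*} [Fintype ι] [Nonempty ι] (n : ℕ)
    (h : ι → Fin n → ℝ) : ℝ :=
  (1 / 2 ^ n) * ∑ σ : Fin n → Bool,
    Finset.univ.sup' Finset.univ_nonempty fun g =>
      (1 / n : ℝ) * ∑ i, (if σ i then (1 : ℝ) else -1) * h g i

/-!
Since `2 min (a, b) = a + b - |a - b|` and the Rademacher average is subadditive, positively
homogeneous and invariant under `h ↦ -h`, the case of two labels reduces to
`Rad |p - q| ≤ Rad (p - q)`. This is the contraction principle for `1`-Lipschitz maps, proved one
coordinate `i₀` at a time: pairing each sign vector with the one flipped at `i₀`, it comes down to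
`max (a + v) + max (a - v) ≤ max (a + u) + max (a - u)` whenever `|v x - v y| ≤ |u x - u y|`.
The case of `c` labels follows by induction, peeling off one label at a time.
-/

open Function

theorem Finset.sup'_add_add_sup'_sub_le {κ : Type*} {s : Finset κ} (hs : s.Nonempty)
    (a u v : κ → ℝ) (huv : ∀ x ∈ s, ∀ y ∈ s, |v x - v y| ≤ |u x - u y|) :
    s.sup' hs (fun x => a x + v x) + s.sup' hs (fun x => a x - v x) ≤
      s.sup' hs (fun x => a x + u x) + s.sup' hs (fun x => a x - u x) := by
  obtain ⟨x, hx, hx_max⟩ := s.exists_mem_eq_sup' hs fun x => a x + v x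
  obtain ⟨y, hy, hy_max⟩ := s.exists_mem_eq_sup' hs fun x => a x - v x
  rw [hx_max, hy_max]
  have hv : v x - v y ≤ |u x - u y| := (le_abs_self _).trans (huv x hx y hy)
  rcases abs_cases (u x - u y) with ⟨habs, -⟩ | ⟨habs, -⟩
  · have := s.le_sup' (fun x => a x + u x) hx
    have := s.le_sup' (fun x => a x - u x) hy
    linarith
  · have := s.le_sup' (fun x => a x + u x) hy
    have := s.le_sup' (fun x => a x - u x) hx
    linarith

theorem Fintype.sum_le_sum_of_involutive {α : Type*} [Fintype α] {e : α → α}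
    (he : Involutive e) {F G : α → ℝ} (hFG : ∀ x, F x + F (e x) ≤ G x + G (e x)) :
    ∑ x, F x ≤ ∑ x, G x := by
  have hF : ∑ x, F (e x) = ∑ x, F x := Fintype.sum_bijective e he.bijective _ _ fun _ => rfl
  have hG : ∑ x, G (e x) = ∑ x, G x := Fintype.sum_bijective e he.bijective _ _ fun _ => rfl
  have := Finset.sum_le_sum fun x (_ : x ∈ univ) => hFG x
  rw [sum_add_distrib, sum_add_distrib, hF, hG] at this
  linarith

section Rademacher

variable {ι : Type*} [Fintype ι] [Nonempty ι] {n : ℕ}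

noncomputable def correlation (σ : Fin n → Bool) (v : Fin n → ℝ) : ℝ :=
  (1 / n : ℝ) * ∑ i, (if σ i then (1 : ℝ) else -1) * v i

noncomputable def maxCorrelation (h : ι → Fin n → ℝ) (σ : Fin n → Bool) : ℝ :=
  univ.sup' univ_nonempty fun g => correlation σ (h g)

theorem rad_eq_sum_maxCorrelation (h : ι → Fin n → ℝ) :
    rad n h = 1 / 2 ^ n * ∑ σ, maxCorrelation h σ :=
  rfl

theorem correlation_add (σ : Fin n → Bool) (v w : Fin n → ℝ) :
    correlation σ (v + w) = correlation σ v + correlation σ w := by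
  simp only [correlation, Pi.add_apply, mul_add, sum_add_distrib]

theorem correlation_smul (σ : Fin n → Bool) (c : ℝ) (v : Fin n → ℝ) :
    correlation σ (c • v) = c * correlation σ v := by
  simp only [correlation, Pi.smul_apply, smul_eq_mul, mul_sum]
  exact sum_congr rfl fun _ _ => by ring

theorem correlation_neg (σ : Fin n → Bool) (v : Fin n → ℝ) :
    correlation σ (-v) = correlation (fun i => !σ i) v := by
  unfold correlation
  congr 1
  refine sum_congr rfl fun i _ => ?_
  cases hσ : σ i <;> simp [hσ]

theorem correlation_eq_update_zero_add (σ : Fin n → Bool) (v : Fin n → ℝ) (i₀ : Fin n) :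
    correlation σ v =
      correlation σ (update v i₀ 0) + (if σ i₀ then (1 : ℝ) else -1) * (1 / n * v i₀) := by
  have hsplit : ∀ w : Fin n → ℝ, ∑ i, (if σ i then (1 : ℝ) else -1) * w i =
      (if σ i₀ then (1 : ℝ) else -1) * w i₀ +
        ∑ i ∈ univ.erase i₀, (if σ i then (1 : ℝ) else -1) * w i :=
    fun w => (add_sum_erase _ _ (mem_univ i₀)).symm
  have hrest : ∑ i ∈ univ.erase i₀, (if σ i then (1 : ℝ) else -1) * update v i₀ 0 i =
      ∑ i ∈ univ.erase i₀, (if σ i then (1 : ℝ) else -1) * v i :=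
    sum_congr rfl fun i hi => by rw [update_of_ne (ne_of_mem_erase hi)]
  unfold correlation
  rw [hsplit v, hsplit (update v i₀ 0), update_self, hrest]
  ring

theorem correlation_update_update_zero (σ : Fin n → Bool) (v : Fin n → ℝ) (i₀ : Fin n)
    (b : Bool) : correlation (update σ i₀ b) (update v i₀ 0) = correlation σ (update v i₀ 0) := by
  unfold correlation
  congr 1
  refine sum_congr rfl fun i _ => ?_
  by_cases hi : i = i₀
  · simp [hi]
  · rw [update_of_ne hi]

theorem maxCorrelation_add_le (p q : ι → Fin n → ℝ) (σ : Fin n → Bool) :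
    maxCorrelation (p + q) σ ≤ maxCorrelation p σ + maxCorrelation q σ :=
  sup'_le _ _ fun g hg => (correlation_add σ (p g) (q g)).trans_le <|
    add_le_add (le_sup' (fun g => correlation σ (p g)) hg)
      (le_sup' (fun g => correlation σ (q g)) hg)

theorem maxCorrelation_smul {c : ℝ} (hc : 0 ≤ c) (h : ι → Fin n → ℝ) (σ : Fin n → Bool) :
    maxCorrelation (c • h) σ = c * maxCorrelation h σ := by
  simp only [maxCorrelation, mul₀_sup' hc, Pi.smul_apply, correlation_smul]

theorem maxCorrelation_neg (h : ι → Fin n → ℝ) (σ : Fin n → Bool) :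
    maxCorrelation (-h) σ = maxCorrelation h fun i => !σ i := by
  simp only [maxCorrelation, Pi.neg_apply, correlation_neg]

theorem maxCorrelation_add_maxCorrelation_flip (h : ι → Fin n → ℝ) (σ : Fin n → Bool)
    (i₀ : Fin n) :
    maxCorrelation h σ + maxCorrelation h (update σ i₀ (!σ i₀)) =
      (univ.sup' univ_nonempty fun g =>
          correlation σ (update (h g) i₀ 0) + 1 / n * h g i₀) +
        univ.sup' univ_nonempty fun g =>
          correlation σ (update (h g) i₀ 0) - 1 / n * h g i₀ := by
  simp only [maxCorrelation]
  conv_lhs => simp only [correlation_eq_update_zero_add _ (h _) i₀, update_self,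
    correlation_update_update_zero]
  cases σ i₀
  · simp only [Bool.not_false, if_true, Bool.false_eq_true, if_false, neg_one_mul, one_mul,
      ← sub_eq_add_neg]
    exact add_comm _ _
  · simp only [Bool.not_true, if_true, Bool.false_eq_true, if_false, neg_one_mul, one_mul,
      ← sub_eq_add_neg]

theorem rad_add_le (p q : ι → Fin n → ℝ) : rad n (p + q) ≤ rad n p + rad n q := by
  simp only [rad_eq_sum_maxCorrelation, ← mul_add, ← sum_add_distrib]
  gcongr with σ
  exact maxCorrelation_add_le p q σ

theorem rad_smul {c : ℝ} (hc : 0 ≤ c) (h : ι → Fin n → ℝ) : rad n (c • h) = c * rad n h := by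
  simp only [rad_eq_sum_maxCorrelation, maxCorrelation_smul hc, ← mul_sum]
  ring

theorem rad_neg (h : ι → Fin n → ℝ) : rad n (-h) = rad n h := by
  have hnot : Involutive fun (σ : Fin n → Bool) i => !σ i := fun σ => by simp
  simp only [rad_eq_sum_maxCorrelation, maxCorrelation_neg]
  congr 1
  exact Fintype.sum_bijective _ hnot.bijective _ _ fun _ => rfl

theorem rad_update_comp_le (h : ι → Fin n → ℝ) (i₀ : Fin n) {ψ : ℝ → ℝ}
    (hψ : LipschitzWith 1 ψ) : rad n (fun g => update (h g) i₀ (ψ (h g i₀))) ≤ rad n h := by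
  have hflip : Involutive fun (σ : Fin n → Bool) => update σ i₀ (!σ i₀) := fun σ => by simp
  rw [rad_eq_sum_maxCorrelation, rad_eq_sum_maxCorrelation]
  gcongr 1 / 2 ^ n * ?_
  refine Fintype.sum_le_sum_of_involutive hflip fun σ => ?_
  simp only [maxCorrelation_add_maxCorrelation_flip, update_idem, update_self]
  refine univ.sup'_add_add_sup'_sub_le _ _ _ _ fun x _ y _ => ?_
  have hψxy : |ψ (h x i₀) - ψ (h y i₀)| ≤ |h x i₀ - h y i₀| := by
    simpa [Real.dist_eq] using hψ.dist_le_mul (h x i₀) (h y i₀)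
  rw [← mul_sub, ← mul_sub, abs_mul, abs_mul]
  gcongr

theorem rad_comp_le (h : ι → Fin n → ℝ) {φ : Fin n → ℝ → ℝ} (hφ : ∀ i, LipschitzWith 1 (φ i)) :
    rad n (fun g i => φ i (h g i)) ≤ rad n h := by
  classical
  suffices ∀ T : Finset (Fin n),
      rad n (fun g i => if i ∈ T then φ i (h g i) else h g i) ≤ rad n h by
    simpa using this univ
  intro T
  induction T using Finset.induction_on with
  | empty => simp
  | @insert i₀ T hi₀ ih =>
    refine le_trans (le_of_eq ?_) ((rad_update_comp_le _ i₀ (hφ i₀)).trans ih)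
    congr 1
    funext g i
    by_cases hi : i = i₀
    · simp [hi, hi₀]
    · simp [hi]

theorem rad_min_le_add (p q : ι → Fin n → ℝ) :
    rad n (fun g i => min (p g i) (q g i)) ≤ rad n p + rad n q := by
  have hmin : (fun g i => min (p g i) (q g i)) =
      (1 / 2 : ℝ) • (p + q + -fun g i => |(p - q) g i|) := by
    funext g i
    have := min_add_max (p g i) (q g i)
    have := max_sub_min_eq_abs' (p g i) (q g i)
    simp only [Pi.smul_apply, Pi.add_apply, Pi.neg_apply, Pi.sub_apply, smul_eq_mul]
    linarith
  have habs : rad n (fun g i => |(p - q) g i|) ≤ rad n p + rad n q :=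
    calc _ ≤ rad n (p - q) := rad_comp_le (p - q) fun _ => lipschitzWith_one_norm
      _ ≤ rad n p + rad n (-q) := sub_eq_add_neg p q ▸ rad_add_le p (-q)
      _ = rad n p + rad n q := by rw [rad_neg]
  have hsum := (rad_add_le (p + q) (-fun g i => |(p - q) g i|)).trans
    (add_le_add (rad_add_le p q) (rad_neg _).le)
  rw [hmin, rad_smul (by norm_num)]
  linarith

theorem rad_inf'_le_sum {κ : Type*} {s : Finset κ} (hs : s.Nonempty) (f : ι → Fin n → κ → ℝ) :
    rad n (fun g i => s.inf' hs (f g i)) ≤ ∑ y ∈ s, rad n (fun g i => f g i y) := by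
  induction hs using Finset.Nonempty.cons_induction with
  | singleton a => simp
  | cons a s ha hs ih =>
    rw [sum_cons]
    simp only [inf'_cons hs]
    exact (rad_min_le_add _ _).trans (add_le_add_right ih _)

end Rademacher

theorem rad_min_over_labels_le_sum_general
    (n c : ℕ) (hc : 0 < c) (ι : Type*) [Fintype ι] [Nonempty ι]
    (f : ι → Fin n → Fin c → ℝ) :
    rad n (fun g i =>
        Finset.univ.inf' (Finset.univ_nonempty_iff.mpr (Fin.pos_iff_nonempty.mp hc))
          fun y => f g i y) ≤
      ∑ y : Fin c, rad n (fun g i => f g i y) :=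
  rad_inf'_le_sum _ f

/-- The general c-class case of Lemma 4: the Rademacher average of the pointwise
minimum over `c` per-label families is bounded by the sum of the per-label
Rademacher averages. -/
theorem rad_min_over_labels_le_sum
    (n c : ℕ) (hn : 0 < n) (hc : 0 < c) (ι : Type*) [Fintype ι] [Nonempty ι]
    (f : ι → Fin n → Fin c → ℝ) :
    rad n (fun g i =>
        Finset.univ.inf' (Finset.univ_nonempty_iff.mpr (Fin.pos_iff_nonempty.mp hc))
          fun y => f g i y) ≤
      ∑ y : Fin c, rad n (fun g i => f g i y) :=
  rad_min_over_labels_le_sum_general n c hc ι f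
end

section
/- Let n and c be positive integers, let L ≥ 0, and let ℓ : EuclideanSpace ℝ (Fin c) → Fin c → ℝ be such that for every y ∈ Fin c the map v ↦ ℓ v y is Lipschitz with constant L with respect to the Euclidean norm. Let ι be a nonempty finite type, X a type, g : ι → X → EuclideanSpace ℝ (Fin c) a family of classifiers, and x : Fin n → X a sample. Then Rad(fun k i => min_{y ∈ Fin c} ℓ (g k (x i)) y) ≤ √2 · c · L · ∑_{y ∈ Fin c} Rad(fun k i => (g k (x i)) y), where for h : ι → Fin n → ℝ, Rad(h) := (1/2^n) · ∑_{σ : Fin n → Bool} max_{k ∈ ι} (1/n) · ∑_{i} ε_σ(i) · h k i, and ε_σ(i) = 1 if σ i = true and ε_σ(i) = −1 otherwise. -/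
open Finset

/-!
The loss `f v = min_y ℓ v y` is `L`-Lipschitz for the Euclidean norm, so
`f v - f w ≤ L ∑_y |v_y - w_y| ≤ c L 𝔼_ρ |⟨ρ, v - w⟩|` over Rademacher vectors `ρ`; the second
inequality holds coordinatewise because flipping `ρ_y` changes `⟨ρ, u⟩` by `2 |u_y|`.
A vector contraction inequality in the spirit of Maurer, proved one sample point at a time,
then replaces each scalar term `σ_i f(v_i)` by `⟨τ_i, c L v_i⟩` with independent Rademacher
vectors `τ_i`, and the supremum of the resulting sum over labels is at most the sum of the
suprema. This gives the bound with constant `c L ≤ √2 c L`.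
-/

open scoped BigOperators NNReal

def boolSign (b : Bool) : ℝ := if b then 1 else -1

@[simp] lemma boolSign_true : boolSign true = 1 := rfl

@[simp] lemma boolSign_false : boolSign false = -1 := rfl

@[simp] lemma boolSign_not (b : Bool) : boolSign (!b) = -boolSign b := by
  cases b <;> simp

@[simp] lemma abs_boolSign (b : Bool) : |boolSign b| = 1 := by
  cases b <;> simp

lemma expect_bool (F : Bool → ℝ) : 𝔼 b, F b = (F true + F false) / 2 := by
  rw [Fintype.expect_eq_sum_div_card, Fintype.sum_bool]
  simp

lemma expect_fin_succ_pi {n : ℕ} {Ω : Type*} [Fintype Ω] [DecidableEq Ω]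
    (F : (Fin (n + 1) → Ω) → ℝ) : 𝔼 σ, F σ = 𝔼 b, 𝔼 σ : Fin n → Ω, F (Fin.cons b σ) := by
  rw [← Fintype.expect_equiv (Fin.consEquiv fun _ => Ω) (fun p => F (Fin.cons p.1 p.2)) F
    fun _ => rfl, ← univ_product_univ, expect_product]

section SignVectors

variable {J : Type*} [Fintype J] [DecidableEq J]

lemma expect_comp_not (F : (J → Bool) → ℝ) : 𝔼 σ : J → Bool, F (fun j => !σ j) = 𝔼 σ, F σ :=
  Fintype.expect_equiv (Equiv.piCongrRight fun _ => Equiv.boolNot) _ _ fun _ => rfl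

lemma expect_sum_boolSign_mul (u : J → ℝ) : 𝔼 σ : J → Bool, ∑ j, boolSign (σ j) * u j = 0 := by
  have h := expect_comp_not fun σ => ∑ j, boolSign (σ j) * u j
  simp only [boolSign_not, neg_mul, sum_neg_distrib, expect_neg_distrib] at h
  linarith

lemma abs_le_expect_abs_sum_boolSign_mul (u : J → ℝ) (y : J) :
    |u y| ≤ 𝔼 ρ : J → Bool, |∑ z, boolSign (ρ z) * u z| := by
  set S : (J → Bool) → ℝ := fun ρ => ∑ z, boolSign (ρ z) * u z
  set flip : (J → Bool) → (J → Bool) := fun ρ => Function.update ρ y (!ρ y)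
  have hflip : ∀ ρ, S ρ - S (flip ρ) = 2 * (boolSign (ρ y) * u y) := by
    intro ρ
    simp only [S, ← sum_sub_distrib]
    rw [sum_eq_single y (fun z _ hz => by simp [flip, hz]) (by simp)]
    simp [flip]
    ring
  have hinv : Function.Involutive flip := fun ρ => by simp [flip]
  calc |u y| = 𝔼 ρ, |S ρ - S (flip ρ)| / 2 := by simp [hflip, abs_mul]
    _ ≤ 𝔼 ρ, (|S ρ| + |S (flip ρ)|) / 2 :=
        expect_le_expect fun ρ _ => by gcongr; exact abs_sub _ _
    _ = 𝔼 ρ, |S ρ| := by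
        rw [← expect_div, expect_add_distrib,
          Fintype.expect_bijective flip hinv.bijective (fun ρ => |S (flip ρ)|) (fun ρ => |S ρ|)
            fun _ => rfl]
        ring

lemma expect_comp_apply {I Ω : Type*} [Fintype I] [DecidableEq I] [Fintype Ω] [DecidableEq Ω]
    [Nonempty Ω] (F : (I → Ω) → ℝ) (y : J) :
    𝔼 τ : I → J → Ω, F (fun i => τ i y) = 𝔼 σ, F σ := by
  let e := (Equiv.piCongrRight fun _ : I => Equiv.piSplitAt y fun _ => Ω).trans
    (Equiv.arrowProdEquivProdArrow I _ _)
  rw [Fintype.expect_equiv e (fun τ => F fun i => τ i y) (fun p => F p.1) fun _ => rfl,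
    ← univ_product_univ, expect_product]
  simp

end SignVectors

section Rademacher

variable {ι : Type*} [Fintype ι] [Nonempty ι] {J : Type*} [Fintype J] [DecidableEq J]
  {Y : Type*} [Fintype Y] [DecidableEq Y]

noncomputable def rademacherAvg (h : ι → J → ℝ) : ℝ :=
  𝔼 σ : J → Bool, univ.sup' univ_nonempty fun k => ∑ j, boolSign (σ j) * h k j

lemma rad_eq_mul_rademacherAvg (n : ℕ) (h : ι → Fin n → ℝ) :
    rad n h = 1 / n * rademacherAvg h := by
  simp_rw [rad, rademacherAvg, Fintype.expect_eq_sum_div_card, Fintype.card_fun,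
    Fintype.card_bool, Fintype.card_fin, ← mul₀_sup' (by positivity : (0 : ℝ) ≤ 1 / n),
    ← mul_sum, boolSign]
  push_cast
  ring

lemma rademacherAvg_nonneg (h : ι → J → ℝ) : 0 ≤ rademacherAvg h := by
  obtain ⟨k⟩ := ‹Nonempty ι›
  calc (0 : ℝ) = 𝔼 σ : J → Bool, ∑ j, boolSign (σ j) * h k j :=
        (expect_sum_boolSign_mul _).symm
    _ ≤ rademacherAvg h :=
        expect_le_expect fun σ _ => le_sup' (fun k => ∑ j, boolSign (σ j) * h k j) (mem_univ k)

lemma rademacherAvg_const_mul {C : ℝ} (hC : 0 ≤ C) (h : ι → J → ℝ) :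
    rademacherAvg (fun k j => C * h k j) = C * rademacherAvg h := by
  simp only [rademacherAvg, mul_expect, mul₀_sup' hC, mul_sum, mul_left_comm C]

lemma expect_sup'_add_boolSign_mul_le (a φ : ι → ℝ) (w : ι → Y → ℝ)
    (hφ : ∀ k j, φ k - φ j ≤ 𝔼 ρ : Y → Bool, |∑ y, boolSign (ρ y) * (w k y - w j y)|) :
    𝔼 b : Bool, univ.sup' univ_nonempty (fun k => a k + boolSign b * φ k) ≤
      𝔼 ρ : Y → Bool, univ.sup' univ_nonempty (fun k => a k + ∑ y, boolSign (ρ y) * w k y) := by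
  set ψ : (Y → Bool) → ι → ℝ := fun ρ k => ∑ y, boolSign (ρ y) * w k y
  set M : (Y → Bool) → ℝ := fun ρ => univ.sup' univ_nonempty fun k => a k + ψ ρ k
  have hψ_not : ∀ ρ k, ψ (fun y => !ρ y) k = -ψ ρ k := fun ρ k => by simp [ψ]
  have hψ_sub : ∀ ρ k j, ψ ρ k - ψ ρ j = ∑ y, boolSign (ρ y) * (w k y - w j y) :=
    fun ρ k j => by simp [ψ, mul_sub]
  -- With `k`, `j` maximising `a + φ` and `a - φ`, both sides compare term by term in `ρ`,
  -- since `ψ` is odd in `ρ` and so `M (!ρ)` is the supremum of `a - ψ ρ`.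
  obtain ⟨k, -, hk⟩ := exists_mem_eq_sup' univ_nonempty fun k => a k + φ k
  obtain ⟨j, -, hj⟩ := exists_mem_eq_sup' univ_nonempty fun k => a k - φ k
  have hpair : ∀ ρ, a k + a j + |ψ ρ k - ψ ρ j| ≤ M ρ + M fun y => !ρ y := by
    intro ρ
    have hk' := le_sup' (fun k => a k + ψ ρ k) (mem_univ k)
    have hj' := le_sup' (fun k => a k + ψ ρ k) (mem_univ j)
    have hk'' := le_sup' (fun k => a k + ψ (fun y => !ρ y) k) (mem_univ k)
    have hj'' := le_sup' (fun k => a k + ψ (fun y => !ρ y) k) (mem_univ j)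
    simp only [M, hψ_not] at hk'' hj'' ⊢
    rcases abs_cases (ψ ρ k - ψ ρ j) with ⟨h, -⟩ | ⟨h, -⟩ <;> linarith
  calc 𝔼 b : Bool, univ.sup' univ_nonempty (fun k => a k + boolSign b * φ k)
      = (a k + a j + (φ k - φ j)) / 2 := by
        rw [expect_bool]
        simp [← sub_eq_add_neg, hk, hj]
        ring
    _ ≤ 𝔼 ρ, (a k + a j + |ψ ρ k - ψ ρ j|) / 2 := by
        rw [← expect_div, expect_add_distrib, Fintype.expect_const]
        simp_rw [hψ_sub]
        linarith [hφ k j]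
    _ ≤ 𝔼 ρ, (M ρ + M fun y => !ρ y) / 2 := expect_le_expect fun ρ _ => by linarith [hpair ρ]
    _ = 𝔼 ρ, M ρ := by
        rw [← expect_div, expect_add_distrib, expect_comp_not M]
        ring

lemma expect_sup'_add_sum_boolSign_mul_le {n : ℕ} (a : ι → ℝ) (f : ι → Fin n → ℝ)
    (w : ι → Fin n → Y → ℝ)
    (hf : ∀ i k j, f k i - f j i ≤ 𝔼 ρ : Y → Bool, |∑ y, boolSign (ρ y) * (w k i y - w j i y)|) :
    𝔼 σ : Fin n → Bool, univ.sup' univ_nonempty (fun k => a k + ∑ i, boolSign (σ i) * f k i) ≤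
      𝔼 τ : Fin n → Y → Bool,
        univ.sup' univ_nonempty (fun k => a k + ∑ i, ∑ y, boolSign (τ i y) * w k i y) := by
  induction n generalizing a with
  | zero => simp
  | succ n ih =>
    calc _ = 𝔼 b : Bool, 𝔼 σ : Fin n → Bool, univ.sup' univ_nonempty
          (fun k => (a k + boolSign b * f k 0) + ∑ i, boolSign (σ i) * f k i.succ) := by
          rw [expect_fin_succ_pi]
          simp_rw [Fin.sum_univ_succ, Fin.cons_zero, Fin.cons_succ, add_assoc]
      _ ≤ 𝔼 b : Bool, 𝔼 τ : Fin n → Y → Bool, univ.sup' univ_nonempty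
          (fun k => (a k + boolSign b * f k 0) + ∑ i, ∑ y, boolSign (τ i y) * w k i.succ y) :=
          expect_le_expect fun b _ =>
            ih _ (fun k i => f k i.succ) (fun k i => w k i.succ) fun i => hf i.succ
      _ = 𝔼 τ : Fin n → Y → Bool, 𝔼 b : Bool, univ.sup' univ_nonempty
          (fun k => (a k + ∑ i, ∑ y, boolSign (τ i y) * w k i.succ y) + boolSign b * f k 0) := by
          rw [expect_comm]
          simp_rw [add_right_comm]
      _ ≤ 𝔼 τ : Fin n → Y → Bool, 𝔼 ρ : Y → Bool, univ.sup' univ_nonempty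
          (fun k => (a k + ∑ i, ∑ y, boolSign (τ i y) * w k i.succ y) +
            ∑ y, boolSign (ρ y) * w k 0 y) :=
          expect_le_expect fun τ _ => expect_sup'_add_boolSign_mul_le _ _ _ (hf 0)
      _ = _ := by
          rw [expect_comm, expect_fin_succ_pi]
          simp_rw [Fin.sum_univ_succ, Fin.cons_zero, Fin.cons_succ, add_right_comm, add_assoc]

lemma expect_sup'_sum_sum_boolSign_mul_le (w : ι → J → Y → ℝ) :
    𝔼 τ : J → Y → Bool, univ.sup' univ_nonempty (fun k => ∑ i, ∑ y, boolSign (τ i y) * w k i y) ≤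
      ∑ y, rademacherAvg fun k i => w k i y := by
  calc _ ≤ 𝔼 τ : J → Y → Bool, ∑ y, univ.sup' univ_nonempty
          (fun k => ∑ i, boolSign (τ i y) * w k i y) :=
        expect_le_expect fun τ _ => sup'_le _ _ fun k _ => by
          rw [sum_comm]
          exact sum_le_sum fun y _ =>
            le_sup' (fun k => ∑ i, boolSign (τ i y) * w k i y) (mem_univ k)
    _ = _ := by
        rw [expect_sum_comm]
        exact sum_congr rfl fun y _ =>
          expect_comp_apply (fun σ => univ.sup' univ_nonempty fun k => ∑ i, boolSign (σ i) * w k i y) y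

theorem rademacherAvg_le_sum_of_sub_le_expect_abs {n : ℕ} (f : ι → Fin n → ℝ)
    (w : ι → Fin n → Y → ℝ)
    (hf : ∀ i k j, f k i - f j i ≤ 𝔼 ρ : Y → Bool, |∑ y, boolSign (ρ y) * (w k i y - w j i y)|) :
    rademacherAvg f ≤ ∑ y, rademacherAvg fun k i => w k i y := by
  have h := expect_sup'_add_sum_boolSign_mul_le 0 f w hf
  simp only [Pi.zero_apply, zero_add] at h
  exact h.trans (expect_sup'_sum_sum_boolSign_mul_le w)

end Rademacher

lemma EuclideanSpace.norm_le_sum_abs {Y : Type*} [Fintype Y] (u : EuclideanSpace ℝ Y) :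
    ‖u‖ ≤ ∑ y, |u y| := by
  rw [EuclideanSpace.norm_eq, Real.sqrt_le_iff]
  refine ⟨sum_nonneg fun _ _ => abs_nonneg _, ?_⟩
  simpa using sum_sq_le_sq_sum_of_nonneg fun y (_ : y ∈ univ) => abs_nonneg (u y)

lemma LipschitzWith.finset_inf' {E Y : Type*} [PseudoMetricSpace E] {K : ℝ≥0} {ℓ : E → Y → ℝ}
    (hℓ : ∀ y, LipschitzWith K fun v => ℓ v y) {s : Finset Y} (hs : s.Nonempty) :
    LipschitzWith K fun v => s.inf' hs (ℓ v) :=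
  LipschitzWith.of_le_add_mul K fun v w => by
    obtain ⟨y, hy, hw⟩ := exists_mem_eq_inf' hs (ℓ w)
    rw [hw]
    exact (inf'_le _ hy).trans ((hℓ y).le_add_mul v w)

lemma LipschitzWith.sub_le_expect_abs_sum_boolSign_mul {Y : Type*} [Fintype Y] [DecidableEq Y]
    {K : ℝ≥0} {F : EuclideanSpace ℝ Y → ℝ} (hF : LipschitzWith K F) (v w : EuclideanSpace ℝ Y) :
    F v - F w ≤ 𝔼 ρ : Y → Bool,
      |∑ y, boolSign (ρ y) * (Fintype.card Y * K * v y - Fintype.card Y * K * w y)| := by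
  set A := 𝔼 ρ : Y → Bool, |∑ y, boolSign (ρ y) * (v y - w y)|
  have hC : (0 : ℝ) ≤ Fintype.card Y * K := by positivity
  have hscale : ∀ ρ : Y → Bool,
      |∑ y, boolSign (ρ y) * (Fintype.card Y * K * v y - Fintype.card Y * K * w y)| =
        Fintype.card Y * K * |∑ y, boolSign (ρ y) * (v y - w y)| := fun ρ => by
    have hsum : ∑ y, boolSign (ρ y) * (Fintype.card Y * K * v y - Fintype.card Y * K * w y) =
        Fintype.card Y * K * ∑ y, boolSign (ρ y) * (v y - w y) := by
      rw [mul_sum]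
      exact sum_congr rfl fun y _ => by ring
    rw [hsum, abs_mul, abs_of_nonneg hC]
  calc F v - F w ≤ K * ‖v - w‖ := by
        simpa [dist_eq_norm] using (le_abs_self _).trans (hF.dist_le_mul v w)
    _ ≤ K * ∑ y, |v y - w y| := by
        gcongr
        simpa using EuclideanSpace.norm_le_sum_abs (v - w)
    _ ≤ K * ∑ _y : Y, A := by
        gcongr with y
        exact abs_le_expect_abs_sum_boolSign_mul (fun y => v y - w y) y
    _ = _ := by
        simp_rw [hscale, ← mul_expect, sum_const, card_univ, nsmul_eq_mul, A]
        ring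

theorem rad_pll_loss_le_sqrt_two_c_L_sum_general
    (n c : ℕ) (hc : 0 < c) (L : ℝ) (hL : 0 ≤ L)
    (ℓ : EuclideanSpace ℝ (Fin c) → Fin c → ℝ)
    (hℓ : ∀ y : Fin c, LipschitzWith L.toNNReal (fun v => ℓ v y))
    (ι : Type*) [Fintype ι] [Nonempty ι] (X : Type*)
    (g : ι → X → EuclideanSpace ℝ (Fin c)) (x : Fin n → X) :
    rad n (fun k i =>
        Finset.univ.inf' (Finset.univ_nonempty_iff.mpr (Fin.pos_iff_nonempty.mp hc))
          fun y => ℓ (g k (x i)) y) ≤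
      Real.sqrt 2 * c * L * ∑ y : Fin c, rad n (fun k i => g k (x i) y) := by
  have hloss := (LipschitzWith.finset_inf' hℓ
    (univ_nonempty_iff.mpr (Fin.pos_iff_nonempty.mp hc))).sub_le_expect_abs_sum_boolSign_mul
  simp only [Fintype.card_fin, Real.coe_toNNReal L hL] at hloss
  have hcontr := rademacherAvg_le_sum_of_sub_le_expect_abs _ (fun k i y => c * L * g k (x i) y)
    fun i k j => hloss (g k (x i)) (g j (x i))
  have hrad : 0 ≤ ∑ y : Fin c, rad n (fun k i => g k (x i) y) := sum_nonneg fun y _ => by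
    rw [rad_eq_mul_rademacherAvg]
    have := rademacherAvg_nonneg fun k i => g k (x i) y
    positivity
  calc _ = 1 / n * rademacherAvg _ := rad_eq_mul_rademacherAvg _ _
    _ ≤ 1 / n * ∑ y, rademacherAvg fun k i => c * L * g k (x i) y :=
        mul_le_mul_of_nonneg_left hcontr (by positivity)
    _ = c * L * ∑ y : Fin c, rad n (fun k i => g k (x i) y) := by
        simp_rw [rademacherAvg_const_mul (by positivity : (0 : ℝ) ≤ c * L),
          rad_eq_mul_rademacherAvg, mul_sum]
        ring_nf
    _ ≤ _ := by
        refine mul_le_mul_of_nonneg_right ?_ hrad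
        rw [mul_assoc]
        exact le_mul_of_one_le_left (by positivity) Real.one_lt_sqrt_two.le

/-- Lemma 4 of the paper in empirical (fixed-sample) form: the Rademacher average
of the minimal-loss partial-label loss class is bounded by `√2 · c · L` times the
sum over labels of the Rademacher averages of the coordinate classes. -/
theorem rad_pll_loss_le_sqrt_two_c_L_sum
    (n c : ℕ) (hn : 0 < n) (hc : 0 < c) (L : ℝ) (hL : 0 ≤ L)
    (ℓ : EuclideanSpace ℝ (Fin c) → Fin c → ℝ)
    (hℓ : ∀ y : Fin c, LipschitzWith L.toNNReal (fun v => ℓ v y))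
    (ι : Type*) [Fintype ι] [Nonempty ι] (X : Type*)
    (g : ι → X → EuclideanSpace ℝ (Fin c)) (x : Fin n → X) :
    rad n (fun k i =>
        Finset.univ.inf' (Finset.univ_nonempty_iff.mpr (Fin.pos_iff_nonempty.mp hc))
          fun y => ℓ (g k (x i)) y) ≤
      Real.sqrt 2 * c * L * ∑ y : Fin c, rad n (fun k i => g k (x i) y) :=
  rad_pll_loss_le_sqrt_two_c_L_sum_general n c hc L hL ℓ hℓ ι X g x
end
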